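/- arXiv:2306.06757 — 5 statements merged into one kernel-verified Lean document; each statement's English description precedes it below -/
import Mathlib

section
/- Let M be a symmetric invertible d×d real matrix, S ⊂ ℝ^d a smooth hypersurface with unit normal field n, and assume ⟨M n(q), n(q)⟩ ≠ 0 on S. Define ν(q) = (1/⟨M n(q), n(q)⟩) M n(q). Then for every q ∈ S and all tangent vectors x, y ∈ T_q S, one has ⟨dν_q(x), dn_q(y)⟩ = ⟨dν_q(y), dn_q(x)⟩. -/
/-! With `g = ⟪M n, n⟫`, the derivative of `ν = g⁻¹ • M n` is `dν = A ∘ dn` for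
`A v = g⁻¹ • M v - (2 / g²) ⟪M n, v⟫ • M n`, an operator that is self-adjoint because `M` is.
Hence `⟪dν x, dn y⟫ = ⟪A (dn x), dn y⟫` is symmetric in `x` and `y`. -/

open RealInnerProductSpace ContinuousLinearMap

section

variable {E F : Type*} [NormedAddCommGroup E] [NormedSpace ℝ E]
  [NormedAddCommGroup F] [InnerProductSpace ℝ F]
  {M : F →L[ℝ] F} {n : E → F} {n' : E →L[ℝ] F} {q : E}

theorem inner_map_comm_of_isSymmetric (hM : (M : F →ₗ[ℝ] F).IsSymmetric) (v w : F) :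
    ⟪M v, w⟫ = ⟪M w, v⟫ :=
  (hM v w).trans (real_inner_comm _ _)

theorem HasFDerivAt.inner_map_self (hM : (M : F →ₗ[ℝ] F).IsSymmetric) (hn : HasFDerivAt n n' q) :
    HasFDerivAt (fun u => ⟪M (n u), n u⟫) ((2 : ℝ) • (innerSL ℝ (M (n q))).comp n') q := by
  refine ((M.hasFDerivAt.comp q hn).inner ℝ hn).congr_fderiv ?_
  ext z
  simp only [Function.comp_apply, comp_apply, prod_apply, fderivInnerCLM_apply, smul_apply,
    coe_innerSL_apply, smul_eq_mul, inner_map_comm_of_isSymmetric hM (n' z)]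
  ring

theorem HasFDerivAt.inv_inner_map_self_smul (hM : (M : F →ₗ[ℝ] F).IsSymmetric)
    (hn : HasFDerivAt n n' q) (hq : ⟪M (n q), n q⟫ ≠ 0) :
    HasFDerivAt (fun u => ⟪M (n u), n u⟫⁻¹ • M (n u))
      (⟪M (n q), n q⟫⁻¹ • M.comp n' -
        (2 / ⟪M (n q), n q⟫ ^ 2) • ((innerSL ℝ (M (n q))).comp n').smulRight (M (n q))) q := by
  have hinv := (hasFDerivAt_inv hq).comp q (hn.inner_map_self hM)
  refine (hinv.smul (M.hasFDerivAt.comp q hn)).congr_fderiv ?_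
  ext z
  simp only [Function.comp_apply, add_apply, sub_apply, smul_apply, comp_apply, smulRight_apply,
    coe_innerSL_apply, toSpanSingleton_apply, smul_eq_mul]
  module

theorem inner_smul_map_sub_smul_comm (hM : (M : F →ₗ[ℝ] F).IsSymmetric) (a b : ℝ) (m v w : F) :
    ⟪a • M v - b • ⟪m, v⟫ • m, w⟫ = ⟪a • M w - b • ⟪m, w⟫ • m, v⟫ := by
  simp only [inner_sub_left, real_inner_smul_left, inner_map_comm_of_isSymmetric hM v]
  ring

end

theorem pseudoEuclidean_L_symmetric_general
    (d : ℕ)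
    (M : EuclideanSpace ℝ (Fin d) →L[ℝ] EuclideanSpace ℝ (Fin d))
    (hMsym : ∀ x y : EuclideanSpace ℝ (Fin d), ⟪M x, y⟫ = ⟪x, M y⟫)
    -- the unit normal field along the parametrization
    (n : EuclideanSpace ℝ (Fin (d - 1)) → EuclideanSpace ℝ (Fin d))
    (hn : ContDiff ℝ 1 n)
    -- the non-degeneracy (space-time) assumption
    (hMn : ∀ u, ⟪M (n u), n u⟫ ≠ 0)
    (ν : EuclideanSpace ℝ (Fin (d - 1)) → EuclideanSpace ℝ (Fin d))
    (hν : ν = fun u => (⟪M (n u), n u⟫)⁻¹ • M (n u)) :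
    ∀ q x y, ⟪fderiv ℝ ν q x, fderiv ℝ n q y⟫ = ⟪fderiv ℝ ν q y, fderiv ℝ n q x⟫ := by
  intro q x y
  have hnq := (hn.differentiable one_ne_zero q).hasFDerivAt
  rw [hν, (hnq.inv_inner_map_self_smul hMsym (hMn q)).fderiv]
  simp only [sub_apply, smul_apply, comp_apply, smulRight_apply, coe_innerSL_apply]
  exact inner_smul_map_sub_smul_comm hMsym _ _ _ _ _

/-- Lemma 28: Let `M` be a symmetric invertible endomorphism of `ℝ^d`,
`S` a smooth hypersurface (given by a local parametrization `r` with unit normal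
field `n`) such that `⟪M n, n⟫ ≠ 0`, and `ν = ⟪M n, n⟫⁻¹ • M n`. Then
`⟪dν(x), dn(y)⟫ = ⟪dν(y), dn(x)⟫` for all tangent directions `x, y`: every
space-time hypersurface is `L`-symmetric. -/
theorem pseudoEuclidean_L_symmetric
    (d : ℕ) (hd : 3 ≤ d)
    (M : EuclideanSpace ℝ (Fin d) →L[ℝ] EuclideanSpace ℝ (Fin d))
    (hMsym : ∀ x y : EuclideanSpace ℝ (Fin d), ⟪M x, y⟫ = ⟪x, M y⟫)
    (hMinv : Function.Bijective M)
    -- a local parametrization of the hypersurface `S`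
    (r : EuclideanSpace ℝ (Fin (d - 1)) → EuclideanSpace ℝ (Fin d))
    (hr : ContDiff ℝ 2 r)
    (hrimm : ∀ u, Function.Injective (fderiv ℝ r u))
    -- the unit normal field along the parametrization
    (n : EuclideanSpace ℝ (Fin (d - 1)) → EuclideanSpace ℝ (Fin d))
    (hn : ContDiff ℝ 1 n)
    (hnunit : ∀ u, ‖n u‖ = 1)
    (hnnormal : ∀ u x, ⟪fderiv ℝ r u x, n u⟫ = 0)
    -- the non-degeneracy (space-time) assumption
    (hMn : ∀ u, ⟪M (n u), n u⟫ ≠ 0)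
    (ν : EuclideanSpace ℝ (Fin (d - 1)) → EuclideanSpace ℝ (Fin d))
    (hν : ν = fun u => (⟪M (n u), n u⟫)⁻¹ • M (n u)) :
    ∀ q x y, ⟪fderiv ℝ ν q x, fderiv ℝ n q y⟫ = ⟪fderiv ℝ ν q y, fderiv ℝ n q x⟫ :=
  pseudoEuclidean_L_symmetric_general d M hMsym n hn hMn ν hν
end

section
/- Consider the ODE (e + y² − x²)·x'·y' + (b + x·y)·x'² − (c + x·y)·y'² = 0 with constants e, b, c ∈ ℝ. Suppose x(t) = r₁ cos(t) and y(t) = r₂ cos(t + φ) with r₁, r₂ ≠ 0 and sin(φ) ≠ 0. Then (x, y) is a solution of the ODE for all t if and only if b = c, c = −r₁ r₂ cos(φ), and e = r₁² − r₂². -/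
/-!
Along `x = r₁ cos t`, `y = r₂ cos (t + φ)` the quartic part of the equation collapses, via
`sin (t - (t + φ)) = -sin φ`, to a quadratic form in `sin t, cos t`. Hence the left-hand side is
`A sin² t + B cos² t + C sin t cos t`, and it vanishes identically iff `A = B = C = 0`
(evaluate at `t = 0, π/2, π/4`). In the unknowns `b - c`, `c + r₁ r₂ cos φ`, `e - r₁² + r₂²`
this linear system is triangular with diagonal `-r₂² sin² φ`, `r₁ r₂ sin φ`, `r₁²`.
-/

open Real

noncomputable def odeForm (e b c x y x' y' : ℝ) : ℝ :=
  (e + y ^ 2 - x ^ 2) * x' * y' + (b + x * y) * x' ^ 2 - (c + x * y) * y' ^ 2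

lemma odeForm_cos_cos (e b c r₁ r₂ u v : ℝ) :
    odeForm e b c (r₁ * cos u) (r₂ * cos v) (-(r₁ * sin u)) (-(r₂ * sin v)) =
      e * r₁ * r₂ * sin u * sin v + b * r₁ ^ 2 * sin u ^ 2 - c * r₂ ^ 2 * sin v ^ 2
        + r₁ * r₂ * sin (u - v) * (r₁ ^ 2 * sin u * cos u + r₂ ^ 2 * sin v * cos v) := by
  rw [odeForm, sin_sub]
  ring

lemma odeForm_cos_cos_add (e b c r₁ r₂ φ t : ℝ) :
    odeForm e b c (r₁ * cos t) (r₂ * cos (t + φ)) (-(r₁ * sin t)) (-(r₂ * sin (t + φ))) =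
      (r₁ ^ 2 * (b - c) + (r₁ ^ 2 - r₂ ^ 2 * cos φ ^ 2) * (c + r₁ * r₂ * cos φ)
          + r₁ * r₂ * cos φ * (e - r₁ ^ 2 + r₂ ^ 2)) * sin t ^ 2
        + -(r₂ ^ 2 * sin φ ^ 2 * (c + r₁ * r₂ * cos φ)) * cos t ^ 2
        + (r₁ * r₂ * sin φ * (e - r₁ ^ 2 + r₂ ^ 2)
          - 2 * r₂ ^ 2 * sin φ * cos φ * (c + r₁ * r₂ * cos φ)) * (sin t * cos t) := by
  rw [odeForm_cos_cos, show t - (t + φ) = -φ by ring, sin_neg, sin_add, cos_add]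
  linear_combination r₁ * r₂ ^ 3 * sin t * (cos φ * sin t + sin φ * cos t) * sin_sq_add_cos_sq φ

lemma sin_sq_cos_sq_combination_eq_zero_iff (A B C : ℝ) :
    (∀ t, A * sin t ^ 2 + B * cos t ^ 2 + C * (sin t * cos t) = 0) ↔
      A = 0 ∧ B = 0 ∧ C = 0 := by
  refine ⟨fun h => ?_, fun ⟨hA, hB, hC⟩ t => by simp [hA, hB, hC]⟩
  have hB : B = 0 := by simpa using h 0
  have hA : A = 0 := by simpa [hB] using h (π / 2)
  have hC : C / 2 = 0 := by
    have h₄ := h (π / 4)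
    rw [sin_pi_div_four, cos_pi_div_four, hA, hB] at h₄
    have hsq : (√2 / 2) ^ 2 = 1 / 2 := by
      rw [div_pow, sq_sqrt zero_le_two]
      norm_num
    linear_combination h₄ - C * hsq
  exact ⟨hA, hB, by linarith⟩

lemma deriv_const_mul_cos (r t : ℝ) :
    deriv (fun t => r * cos t) t = -(r * sin t) := by
  simp

lemma deriv_const_mul_cos_add (r φ t : ℝ) :
    deriv (fun t => r * cos (t + φ)) t = -(r * sin (t + φ)) := by
  simp

/-- Lemma 27, elliptic case: for `x t = r₁ cos t`,
`y t = r₂ cos (t + φ)` with `r₁, r₂ ≠ 0` and `sin φ ≠ 0`, the pair `(x, y)`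
solves `(e + y² − x²) x' y' + (b + x y) x'² − (c + x y) y'² = 0` for all `t`
iff `b = c`, `c = −r₁ r₂ cos φ` and `e = r₁² − r₂²`. -/
theorem elliptic_solution_iff
    (e b c r₁ r₂ φ : ℝ) (hr₁ : r₁ ≠ 0) (hr₂ : r₂ ≠ 0) (hφ : Real.sin φ ≠ 0)
    (x y : ℝ → ℝ)
    (hx : x = fun t => r₁ * Real.cos t)
    (hy : y = fun t => r₂ * Real.cos (t + φ)) :
    (∀ t : ℝ,
        (e + y t ^ 2 - x t ^ 2) * deriv x t * deriv y t
          + (b + x t * y t) * deriv x t ^ 2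
          - (c + x t * y t) * deriv y t ^ 2 = 0) ↔
      (b = c ∧ c = -(r₁ * r₂ * Real.cos φ) ∧ e = r₁ ^ 2 - r₂ ^ 2) := by
  subst hx hy
  change (∀ t, odeForm e b c _ _ _ _ = 0) ↔ _
  simp only [deriv_const_mul_cos, deriv_const_mul_cos_add, odeForm_cos_cos_add,
    sin_sq_cos_sq_combination_eq_zero_iff]
  constructor
  · rintro ⟨hA, hB, hC⟩
    have hc : c + r₁ * r₂ * cos φ = 0 := by simpa [hr₂, hφ] using hB
    have he : e - r₁ ^ 2 + r₂ ^ 2 = 0 := by simpa [hc, hr₁, hr₂, hφ] using hC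
    have hb : b - c = 0 := by simpa [hc, he, hr₁] using hA
    exact ⟨by linarith, by linarith, by linarith⟩
  · rintro ⟨rfl, rfl, rfl⟩
    exact ⟨by ring, by ring, by ring⟩
end

section
/- Let e, b, c ∈ ℝ with b = c, and let r₁, r₂, φ ∈ ℝ satisfy r₁ r₂ ≠ 0, sin φ ≠ 0, c = −r₁ r₂ cos φ and e = r₁² − r₂². Then the curve γ(t) = (r₁ cos t, r₂ cos(t + φ)) satisfies, for every t, the equation (e + y(t)² − x(t)²) x'(t) y'(t) + (b + x(t) y(t)) x'(t)² − (c + x(t) y(t)) y'(t)² = 0. -/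
/-!
Write `x' = -r₁ sin t`, `y' = -r₂ sin (t + φ)`. Along the ellipse three quantities are conserved:
`x² + x'² = r₁²`, `y² + y'² = r₂²` and `x y + x' y' = r₁ r₂ cos φ = -c`. Hence `e + y² - x² = x'² - y'²`
and `b + x y = -x' y'`, and the left-hand side becomes `(x'² - y'²) x' y' - x' y' (x'² - y'²) = 0`.
-/

open Real

theorem quadratic_ode_eq_zero_of_invariants {e b x y x' y' r₁ r₂ : ℝ}
    (he : e = r₁ ^ 2 - r₂ ^ 2) (hx : x ^ 2 + x' ^ 2 = r₁ ^ 2) (hy : y ^ 2 + y' ^ 2 = r₂ ^ 2)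
    (hxy : x * y + x' * y' = -b) :
    (e + y ^ 2 - x ^ 2) * x' * y' + (b + x * y) * x' ^ 2 - (b + x * y) * y' ^ 2 = 0 := by
  linear_combination (x' * y') * he + (x' * y') * hy - (x' * y') * hx
    + (x' ^ 2 - y' ^ 2) * hxy

theorem hasDerivAt_mul_cos_add (r φ t : ℝ) :
    HasDerivAt (fun t => r * cos (t + φ)) (-(r * sin (t + φ))) t := by
  simpa using ((hasDerivAt_cos (t + φ)).comp_add_const t φ).const_mul r

theorem mul_cos_sq_add_mul_sin_sq (r s : ℝ) : (r * cos s) ^ 2 + (-(r * sin s)) ^ 2 = r ^ 2 := by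
  linear_combination r ^ 2 * cos_sq_add_sin_sq s

theorem mul_cos_mul_cos_add_mul_sin_mul_sin (r₁ r₂ t φ : ℝ) :
    r₁ * cos t * (r₂ * cos (t + φ)) + -(r₁ * sin t) * -(r₂ * sin (t + φ)) = r₁ * r₂ * cos φ := by
  have h : cos (t + φ - t) = cos (t + φ) * cos t + sin (t + φ) * sin t := cos_sub _ _
  rw [add_sub_cancel_left] at h
  linear_combination -(r₁ * r₂) * h

theorem ellipse_is_solution_general
    (e b c r₁ r₂ φ : ℝ)
    (hbc : b = c) (hc : c = -(r₁ * r₂ * Real.cos φ)) (he : e = r₁ ^ 2 - r₂ ^ 2)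
    (x y : ℝ → ℝ)
    (hx : x = fun t => r₁ * Real.cos t)
    (hy : y = fun t => r₂ * Real.cos (t + φ)) :
    ∀ t : ℝ,
      (e + y t ^ 2 - x t ^ 2) * deriv x t * deriv y t
        + (b + x t * y t) * deriv x t ^ 2
        - (c + x t * y t) * deriv y t ^ 2 = 0 := by
  intro t
  subst hx hy hbc
  have dx : HasDerivAt (fun t => r₁ * cos t) (-(r₁ * sin t)) t := by
    simpa only [add_zero] using hasDerivAt_mul_cos_add r₁ 0 t
  rw [dx.deriv, (hasDerivAt_mul_cos_add r₂ φ t).deriv]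
  exact quadratic_ode_eq_zero_of_invariants he (mul_cos_sq_add_mul_sin_sq r₁ t)
    (mul_cos_sq_add_mul_sin_sq r₂ (t + φ))
    (by rw [hc, neg_neg]; exact mul_cos_mul_cos_add_mul_sin_mul_sin r₁ r₂ t φ)

/-- Lemma 27, 'if' direction, elliptic case: if `b = c`,
`c = −r₁ r₂ cos φ` and `e = r₁² − r₂²` (with `r₁ r₂ ≠ 0`, `sin φ ≠ 0`), then
`γ(t) = (r₁ cos t, r₂ cos (t + φ))` is an integral curve of the ODE. -/
theorem ellipse_is_solution
    (e b c r₁ r₂ φ : ℝ) (hr : r₁ * r₂ ≠ 0) (hφ : Real.sin φ ≠ 0)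
    (hbc : b = c) (hc : c = -(r₁ * r₂ * Real.cos φ)) (he : e = r₁ ^ 2 - r₂ ^ 2)
    (x y : ℝ → ℝ)
    (hx : x = fun t => r₁ * Real.cos t)
    (hy : y = fun t => r₂ * Real.cos (t + φ)) :
    ∀ t : ℝ,
      (e + y t ^ 2 - x t ^ 2) * deriv x t * deriv y t
        + (b + x t * y t) * deriv x t ^ 2
        - (c + x t * y t) * deriv y t ^ 2 = 0 :=
  ellipse_is_solution_general e b c r₁ r₂ φ hbc hc he x y hx hy
end

section
/- Let e, b, c ∈ ℝ with b = c, and let r₁, r₂, φ ∈ ℝ satisfy r₁ r₂ ≠ 0, φ ≠ 0, c = −r₁ r₂ cosh φ and e = r₁² − r₂². Then the curve γ(t) = (r₁ cosh t, r₂ cosh(t + φ)) satisfies, for every t, (e + y² − x²) x' y' + (b + x y) x'² − (c + x y) y'² = 0. -/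
/-!
Along `x = r₁ cosh t`, `y = r₂ cosh (t + φ)` the Minkowski-type quantities
`x² - x'² = r₁²`, `y² - y'² = r₂²` and `x y - x' y' = r₁ r₂ cosh φ` are constant.
With `b = c` the ODE reads `(e + y² - x²) x' y' + (c + x y) (x'² - y'²) = 0`, and the choice
of `c` turns `c + x y` into `x' y'`, after which the choice of `e` makes the bracket vanish.
-/

open Real

theorem quadratic_form_eq_zero_of_invariants {e c x y u v : ℝ} (hc : c + x * y = u * v)
    (he : e = (x ^ 2 - u ^ 2) - (y ^ 2 - v ^ 2)) :
    (e + y ^ 2 - x ^ 2) * u * v + (c + x * y) * u ^ 2 - (c + x * y) * v ^ 2 = 0 := by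
  rw [hc, he]
  ring

theorem hyperbola_is_solution_general
    (e b c r₁ r₂ φ : ℝ)
    (hbc : b = c) (hc : c = -(r₁ * r₂ * Real.cosh φ)) (he : e = r₁ ^ 2 - r₂ ^ 2)
    (x y : ℝ → ℝ)
    (hx : x = fun t => r₁ * Real.cosh t)
    (hy : y = fun t => r₂ * Real.cosh (t + φ)) :
    ∀ t : ℝ,
      (e + y t ^ 2 - x t ^ 2) * deriv x t * deriv y t
        + (b + x t * y t) * deriv x t ^ 2
        - (c + x t * y t) * deriv y t ^ 2 = 0 := by
  intro t
  have hdx : deriv x t = r₁ * sinh t := by simp [hx]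
  have hdy : deriv y t = r₂ * sinh (t + φ) := by simp [hy]
  rw [hdx, hdy, hbc]
  subst hx hy
  apply quadratic_form_eq_zero_of_invariants
  · have hcross : cosh (t + φ) * cosh t - sinh (t + φ) * sinh t = cosh φ := by
      rw [← cosh_sub, add_sub_cancel_left]
    rw [hc]
    linear_combination r₁ * r₂ * hcross
  · rw [he]
    linear_combination r₂ ^ 2 * cosh_sq_sub_sinh_sq (t + φ) - r₁ ^ 2 * cosh_sq_sub_sinh_sq t

/-- Lemma 27, hyperbolic case: if `b = c`, `c = −r₁ r₂ cosh φ` and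
`e = r₁² − r₂²` (with `r₁ r₂ ≠ 0`, `φ ≠ 0`), then
`γ(t) = (r₁ cosh t, r₂ cosh (t + φ))` is an integral curve of the ODE. -/
theorem hyperbola_is_solution
    (e b c r₁ r₂ φ : ℝ) (hr : r₁ * r₂ ≠ 0) (hφ : φ ≠ 0)
    (hbc : b = c) (hc : c = -(r₁ * r₂ * Real.cosh φ)) (he : e = r₁ ^ 2 - r₂ ^ 2)
    (x y : ℝ → ℝ)
    (hx : x = fun t => r₁ * Real.cosh t)
    (hy : y = fun t => r₂ * Real.cosh (t + φ)) :
    ∀ t : ℝ,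
      (e + y t ^ 2 - x t ^ 2) * deriv x t * deriv y t
        + (b + x t * y t) * deriv x t ^ 2
        - (c + x t * y t) * deriv y t ^ 2 = 0 :=
  hyperbola_is_solution_general e b c r₁ r₂ φ hbc hc he x y hx hy
end

section
/- Let K₁ = r₁ r₂³ sin²φ cos φ + c r₂² sin²φ, K₂ = b r₁² + e r₁ r₂ cos φ − c r₂² cos²φ + r₁ r₂³ sin²φ cos φ, K₃ = e r₁ r₂ sin φ − r₁³ r₂ sin φ − 2 c r₂² sin φ cos φ − r₁ r₂³ sin φ (cos²φ − sin²φ), with r₁, r₂ ≠ 0 and sin φ ≠ 0. Then K₁ = K₂ = K₃ = 0 if and only if c = −r₁ r₂ cos φ, e = r₁² − r₂², and (b − c)(r₂² + e) = 0. -/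
/-!
The system is triangular: `K₁ = r₂² sin²φ (c + r₁ r₂ cos φ)`, so `K₁ = 0` fixes `c`; for that `c`,
`sin²φ + cos²φ = 1` gives `K₃ = r₁ r₂ sin φ (e - (r₁² - r₂²))`, which fixes `e`; and for those `c`
and `e`, `K₂ = (b - c)(r₂² + e)`.
-/

open Real

section SystemK

variable (b c e r₁ r₂ φ : ℝ)

lemma K₁_eq_mul :
    r₁ * r₂ ^ 3 * sin φ ^ 2 * cos φ + c * r₂ ^ 2 * sin φ ^ 2
      = r₂ ^ 2 * sin φ ^ 2 * (c + r₁ * r₂ * cos φ) := by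
  ring

variable {c}

lemma K₃_eq_mul_of_eq (hc : c = -(r₁ * r₂ * cos φ)) :
    e * r₁ * r₂ * sin φ - r₁ ^ 3 * r₂ * sin φ - 2 * c * r₂ ^ 2 * sin φ * cos φ
        - r₁ * r₂ ^ 3 * sin φ * (cos φ ^ 2 - sin φ ^ 2)
      = r₁ * r₂ * sin φ * (e - (r₁ ^ 2 - r₂ ^ 2)) := by
  subst hc
  linear_combination (r₁ * r₂ ^ 3 * sin φ) * sin_sq_add_cos_sq φ

variable {e}

lemma K₂_eq_mul_of_eq (hc : c = -(r₁ * r₂ * cos φ)) (he : e = r₁ ^ 2 - r₂ ^ 2) :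
    b * r₁ ^ 2 + e * r₁ * r₂ * cos φ - c * r₂ ^ 2 * cos φ ^ 2
        + r₁ * r₂ ^ 3 * sin φ ^ 2 * cos φ
      = (b - c) * (r₂ ^ 2 + e) := by
  subst hc he
  linear_combination (r₁ * r₂ ^ 3 * cos φ) * sin_sq_add_cos_sq φ

end SystemK

/-- system (14): with `r₁, r₂ ≠ 0` and `sin φ ≠ 0`, the system
`K₁ = K₂ = K₃ = 0` is equivalent to `c = −r₁ r₂ cos φ`, `e = r₁² − r₂²` and
`(b − c)(r₂² + e) = 0`. -/
theorem system_K_iff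
    (b c e r₁ r₂ φ : ℝ) (hr₁ : r₁ ≠ 0) (hr₂ : r₂ ≠ 0) (hφ : Real.sin φ ≠ 0)
    (K₁ K₂ K₃ : ℝ)
    (hK₁ : K₁ = r₁ * r₂ ^ 3 * Real.sin φ ^ 2 * Real.cos φ + c * r₂ ^ 2 * Real.sin φ ^ 2)
    (hK₂ : K₂ = b * r₁ ^ 2 + e * r₁ * r₂ * Real.cos φ - c * r₂ ^ 2 * Real.cos φ ^ 2
        + r₁ * r₂ ^ 3 * Real.sin φ ^ 2 * Real.cos φ)
    (hK₃ : K₃ = e * r₁ * r₂ * Real.sin φ - r₁ ^ 3 * r₂ * Real.sin φ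
        - 2 * c * r₂ ^ 2 * Real.sin φ * Real.cos φ
        - r₁ * r₂ ^ 3 * Real.sin φ * (Real.cos φ ^ 2 - Real.sin φ ^ 2)) :
    (K₁ = 0 ∧ K₂ = 0 ∧ K₃ = 0) ↔
      (c = -(r₁ * r₂ * Real.cos φ) ∧ e = r₁ ^ 2 - r₂ ^ 2 ∧ (b - c) * (r₂ ^ 2 + e) = 0) := by
  have hK₁c : K₁ = 0 ↔ c = -(r₁ * r₂ * cos φ) := by
    rw [hK₁, K₁_eq_mul, mul_eq_zero, or_iff_right (by positivity), add_eq_zero_iff_eq_neg]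
  rw [hK₁c, and_comm (a := K₂ = 0)]
  refine and_congr_right fun hc => ?_
  have hK₃e : K₃ = 0 ↔ e = r₁ ^ 2 - r₂ ^ 2 := by
    rw [hK₃, K₃_eq_mul_of_eq e r₁ r₂ φ hc, mul_eq_zero, or_iff_right (by positivity), sub_eq_zero]
  rw [hK₃e]
  exact and_congr_right fun he => by rw [hK₂, K₂_eq_mul_of_eq b r₁ r₂ φ hc he]
end
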